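/- Fix N ≥ 1 and constants η, η' with η/√N > η' > 1. For k ∈ ℤ, let ℱ_k be the family of closed dyadic cubes [0, 2^{−k}]^N + m·2^{−k} with m ∈ ℤ^N, and for Q ∈ ℱ_{k+1} let Q̃ ∈ ℱ_k denote its dyadic parent. For a cube Q = Q(x, s) and σ > 0, write Q_σ := Q(x, σs) for the concentric dilate. Let Ω ⊂ ℝ^N be an open domain with ∂Ω ≠ ∅ and let 𝒬 be the set of dyadic cubes Q such that Q_η ⊂ Ω and Q̃_η ⊄ Ω. Then Ω = ⋃_{Q ∈ 𝒬} Q. -/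

import Mathlib

open MeasureTheory Real Metric
open scoped ENNReal NNReal

noncomputable section

/-- `cube x s` is the closed cube of center `x` and side `s`, i.e. the closed
`ℓ^∞`-ball of radius `s/2` around `x`. -/
def cube {N : ℕ} (x : EuclideanSpace ℝ (Fin N)) (s : ℝ) : Set (EuclideanSpace ℝ (Fin N)) :=
  {y | ∀ i, |y i - x i| ≤ s / 2}

/-- Center of the dyadic cube `[0, 2^{-k}]^N + m·2^{-k}` of generation `k ∈ ℤ`. -/
def dyCenter (N : ℕ) (k : ℤ) (m : Fin N → ℤ) : EuclideanSpace ℝ (Fin N) :=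
  WithLp.toLp 2 (fun i => ((m i : ℝ) + 1 / 2) * (2 : ℝ) ^ (-k))

/-- Side length `2^{-k}` of a dyadic cube of generation `k`. -/
def dySide (k : ℤ) : ℝ := (2 : ℝ) ^ (-k)

/-- Index of the dyadic parent: the dyadic cube of generation `k` and index `m` is
contained in the unique dyadic cube of generation `k - 1` with index `fun i => ⌊m i / 2⌋`. -/
def dyParentIdx {N : ℕ} (m : Fin N → ℤ) : Fin N → ℤ := fun i => Int.fdiv (m i) 2

/-- The dyadic cube of generation `k` and index `m` belongs to the Whitney family `𝒬`
for `Ω` (with dilation parameter `η`): its dilate `Q_η` is contained in `Ω`, while the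
dilate `Q̃_η` of its dyadic parent is not. -/
def memQcal {N : ℕ} (Ω : Set (EuclideanSpace ℝ (Fin N))) (η : ℝ) (k : ℤ) (m : Fin N → ℤ) :
    Prop :=
  cube (dyCenter N k m) (η * dySide k) ⊆ Ω ∧
  ¬ cube (dyCenter N (k - 1) (dyParentIdx m)) (η * dySide (k - 1)) ⊆ Ω

/-! Each `x ∈ Ω` lies in a dyadic cube `Q_k(x)` of every generation `k`, and `Q_{k-1}(x)` is
the parent of `Q_k(x)`. For `k` large, `(Q_k(x))_η` lies in a ball around `x` inside `Ω`; for `k`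
very negative it is so large compared with `dist x z`, `z ∉ Ω`, that it contains `z` (this is
where `η > 1`, a consequence of `η / √N > η' > 1`, is needed). The first generation `k` with
`(Q_k(x))_η ⊆ Ω` therefore yields a Whitney cube containing `x`. Conversely every Whitney cube
satisfies `Q ⊆ Q_η ⊆ Ω`. -/

open Filter Topology

lemma one_lt_of_lt_div_sqrt {a η : ℝ} {n : ℕ} (ha : 1 < a) (h : a < η / √n) : 1 < η := by
  rcases Nat.eq_zero_or_pos n with rfl | hn
  · simp only [Nat.cast_zero, Real.sqrt_zero, div_zero] at h; linarith
  · have hsqrt : 1 ≤ √(n : ℝ) := Real.one_le_sqrt.mpr (by exact_mod_cast hn)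
    have hη : 0 < η := by
      by_contra! hη
      linarith [div_nonpos_of_nonpos_of_nonneg hη (zero_le_one.trans hsqrt)]
    exact (ha.trans h).trans_le (div_le_self hη.le hsqrt)

lemma Int.exists_and_not_sub_one {P : ℤ → Prop} (hP : ∃ k, P k)
    (hbot : ∀ᶠ k in atBot, ¬ P k) : ∃ k, P k ∧ ¬ P (k - 1) := by
  obtain ⟨K, hK⟩ := eventually_atBot.1 hbot
  have hbdd : ∃ b : ℤ, ∀ k, P k → b ≤ k :=
    ⟨K + 1, fun k hk => by by_contra! hlt; exact hK k (by omega) hk⟩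
  obtain ⟨k, hk, hleast⟩ := Int.exists_least_of_bdd hbdd hP
  exact ⟨k, hk, fun hk' => by linarith [hleast _ hk']⟩

lemma tendsto_two_zpow_atTop : Tendsto (fun k : ℤ => (2 : ℝ) ^ k) atTop atTop := by
  refine tendsto_atTop_atTop.2 fun b => ?_
  obtain ⟨n, hn⟩ := pow_unbounded_of_one_lt b one_lt_two
  refine ⟨n, fun k hk => hn.le.trans ?_⟩
  rw [← zpow_natCast]
  exact zpow_le_zpow_right₀ one_le_two hk

lemma dySide_pos (k : ℤ) : 0 < dySide k := zpow_pos two_pos _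

lemma tendsto_dySide_atTop : Tendsto dySide atTop (𝓝 0) := by
  refine (tendsto_inv_atTop_zero.comp tendsto_two_zpow_atTop).congr fun k => ?_
  simp [dySide, zpow_neg]

lemma tendsto_dySide_atBot : Tendsto dySide atBot atTop :=
  tendsto_two_zpow_atTop.comp tendsto_neg_atBot_atTop

section Cube

variable {N : ℕ}

lemma cube_mono {x : EuclideanSpace ℝ (Fin N)} {s t : ℝ} (h : s ≤ t) : cube x s ⊆ cube x t :=
  fun _ hy i => (hy i).trans (by linarith)

lemma dist_le_of_mem_cube {c y z : EuclideanSpace ℝ (Fin N)} {s t : ℝ}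
    (hy : y ∈ cube c s) (hz : z ∈ cube c t) : dist y z ≤ √N * ((s + t) / 2) := by
  rcases Nat.eq_zero_or_pos N with rfl | hN
  · simp [Subsingleton.elim y z]
  have hcoord : ∀ i, dist (y i) (z i) ≤ (s + t) / 2 := fun i => by
    rw [Real.dist_eq]
    calc |y i - z i| = |(y i - c i) - (z i - c i)| := by ring_nf
      _ ≤ |y i - c i| + |z i - c i| := abs_sub _ _
      _ ≤ (s + t) / 2 := by linarith [hy i, hz i]
  have hst : 0 ≤ (s + t) / 2 := dist_nonneg.trans (hcoord ⟨0, hN⟩)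
  calc dist y z = √(∑ i, dist (y i) (z i) ^ 2) := EuclideanSpace.dist_eq y z
    _ ≤ √(∑ _i : Fin N, ((s + t) / 2) ^ 2) := by
      gcongr with i
      exact hcoord i
    _ = √N * ((s + t) / 2) := by
      simp [Real.sqrt_mul, Real.sqrt_sq hst]

lemma mem_cube_of_dist_le {c y z : EuclideanSpace ℝ (Fin N)} {s r : ℝ}
    (hy : y ∈ cube c s) (h : dist z y ≤ r) : z ∈ cube c (s + 2 * r) := fun i => by
  have hzy : |z i - y i| ≤ r := (PiLp.dist_apply_le z y i).trans h
  calc |z i - c i| = |(z i - y i) + (y i - c i)| := by ring_nf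
    _ ≤ |z i - y i| + |y i - c i| := abs_add_le _ _
    _ ≤ (s + 2 * r) / 2 := by linarith [hy i]

def dyIndex (x : EuclideanSpace ℝ (Fin N)) (k : ℤ) : Fin N → ℤ := fun i => ⌊x i * 2 ^ k⌋

lemma mem_cube_dyIndex (x : EuclideanSpace ℝ (Fin N)) (k : ℤ) :
    x ∈ cube (dyCenter N k (dyIndex x k)) (dySide k) := fun i => by
  set t := x i * 2 ^ k
  have hx : x i = t * dySide k := by
    rw [dySide, zpow_neg, mul_assoc, mul_inv_cancel₀ (zpow_ne_zero k two_ne_zero), mul_one]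
  have ht : |t - (⌊t⌋ + 1 / 2)| ≤ 1 / 2 :=
    abs_le.2 ⟨by linarith [Int.floor_le t], by linarith [Int.lt_floor_add_one t]⟩
  calc |x i - dyCenter N k (dyIndex x k) i| = |(t - (⌊t⌋ + 1 / 2)) * dySide k| := by
        rw [hx]; simp only [dyCenter, dyIndex, dySide, PiLp.toLp_apply, t]; ring_nf
    _ = |t - (⌊t⌋ + 1 / 2)| * dySide k := by rw [abs_mul, abs_of_pos (dySide_pos k)]
    _ ≤ dySide k / 2 := by nlinarith [dySide_pos k]

lemma dyParentIdx_dyIndex (x : EuclideanSpace ℝ (Fin N)) (k : ℤ) :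
    dyParentIdx (dyIndex x k) = dyIndex x (k - 1) := funext fun i => by
  have hhalf : x i * 2 ^ (k - 1) = x i * 2 ^ k / (2 : ℕ) := by
    rw [zpow_sub₀ two_ne_zero, zpow_one, mul_div_assoc, Nat.cast_ofNat]
  rw [dyParentIdx, dyIndex, dyIndex, hhalf, Int.floor_div_natCast,
    Int.fdiv_eq_ediv_of_nonneg _ zero_le_two, Nat.cast_ofNat]

lemma eventually_cube_dyIndex_subset {Ω : Set (EuclideanSpace ℝ (Fin N))}
    {x : EuclideanSpace ℝ (Fin N)} (hΩ : IsOpen Ω) (hx : x ∈ Ω) (η : ℝ) :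
    ∀ᶠ k in atTop, cube (dyCenter N k (dyIndex x k)) (η * dySide k) ⊆ Ω := by
  obtain ⟨ε, hε, hball⟩ := Metric.isOpen_iff.1 hΩ x hx
  have hsmall : ∀ᶠ k in atTop, √N * ((η + 1) / 2) * dySide k < ε := by
    have := tendsto_dySide_atTop.const_mul (√N * ((η + 1) / 2))
    rw [mul_zero] at this
    exact this.eventually (gt_mem_nhds hε)
  filter_upwards [hsmall] with k hk y hy
  apply hball
  calc dist y x ≤ √N * ((η * dySide k + dySide k) / 2) :=
        dist_le_of_mem_cube hy (mem_cube_dyIndex x k)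
    _ = √N * ((η + 1) / 2) * dySide k := by ring
    _ < ε := hk

lemma eventually_not_cube_dyIndex_subset {Ω : Set (EuclideanSpace ℝ (Fin N))}
    {z : EuclideanSpace ℝ (Fin N)} (hz : z ∉ Ω) (x : EuclideanSpace ℝ (Fin N)) {η : ℝ}
    (hη : 1 < η) : ∀ᶠ k in atBot, ¬ cube (dyCenter N k (dyIndex x k)) (η * dySide k) ⊆ Ω := by
  filter_upwards [tendsto_dySide_atBot.eventually_ge_atTop (2 * dist z x / (η - 1))]
    with k hk hsub
  rw [div_le_iff₀ (sub_pos.2 hη)] at hk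
  exact hz (hsub (cube_mono (by linarith) (mem_cube_of_dist_le (mem_cube_dyIndex x k) le_rfl)))

end Cube

theorem union_whitney_cubes_general (N : ℕ) (η η' : ℝ)
    (hη'1 : 1 < η') (hηη' : η' < η / Real.sqrt N)
    (Ω : Set (EuclideanSpace ℝ (Fin N))) (hΩ : IsOpen Ω) (hfr : (frontier Ω).Nonempty) :
    Ω = ⋃ (k : ℤ) (m : Fin N → ℤ) (_ : memQcal Ω η k m), cube (dyCenter N k m) (dySide k) := by
  have hη : 1 < η := one_lt_of_lt_div_sqrt hη'1 hηη'
  obtain ⟨z, hz⟩ := hfr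
  have hzΩ : z ∉ Ω := (hΩ.frontier_eq ▸ hz).2
  refine Set.Subset.antisymm (fun x hx => ?_) ?_
  · obtain ⟨k, hk, hk'⟩ := Int.exists_and_not_sub_one
      (eventually_cube_dyIndex_subset hΩ hx η).exists (eventually_not_cube_dyIndex_subset hzΩ x hη)
    refine Set.mem_iUnion₂.2 ⟨k, dyIndex x k, Set.mem_iUnion.2 ⟨⟨hk, ?_⟩, mem_cube_dyIndex x k⟩⟩
    rwa [dyParentIdx_dyIndex]
  · simp only [Set.iUnion_subset_iff]
    exact fun k m hQ => (cube_mono (le_mul_of_one_le_left (dySide_pos k).le hη.le)).trans hQ.1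

/-- **Lemma 7.** Fix `N ≥ 1` and constants `η, η'` with `η/√N > η' > 1`, and let
`Ω ⊂ ℝ^N` be an open domain with `∂Ω ≠ ∅`.  Then `Ω` is the union of the cubes of the
Whitney family `𝒬 = {Q dyadic : Q_η ⊆ Ω and Q̃_η ⊄ Ω}`. -/
theorem union_whitney_cubes (N : ℕ) (hN : 1 ≤ N) (η η' : ℝ)
    (hη'1 : 1 < η') (hηη' : η' < η / Real.sqrt N)
    (Ω : Set (EuclideanSpace ℝ (Fin N))) (hΩ : IsOpen Ω) (hfr : (frontier Ω).Nonempty) :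
    Ω = ⋃ (k : ℤ) (m : Fin N → ℤ) (_ : memQcal Ω η k m), cube (dyCenter N k m) (dySide k) :=
  union_whitney_cubes_general N η η' hη'1 hηη' Ω hΩ hfr

end
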